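/- Let f : ℍ₊ → ℍ be slice hyperholomorphic on ℍ₊ = {p ∈ ℍ : Re p > 0}, and for I ∈ 𝕊 put N_I(f) = sup_{x>0} ∫_ℝ |f(x + Iy)|² dy ∈ [0, ∞]. If N_I(f) < ∞ for some I ∈ 𝕊, then N_J(f) < ∞ for every J ∈ 𝕊; that is, f belongs to the Hardy space H₂(Π₊,I) of one slice if and only if it belongs to the Hardy space of every slice. -/

import Mathlib

local notation "ℍ" => Quaternion ℝ

open scoped ENNReal

/-- The complex plane `ℂ_I = ℝ + Iℝ` through `1` and `I`. -/
def slicePlane (I : ℍ) : Set ℍ := {p | ∃ x y : ℝ, p = (x : ℍ) + (y : ℍ) * I}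

/-- `f : Ω → ℍ` is (left) slice hyperholomorphic on `Ω`. -/
def SliceHyperholomorphicOn (f : ℍ → ℍ) (Ω : Set ℍ) : Prop :=
  DifferentiableOn ℝ f Ω ∧
    ∀ I : ℍ, I ^ 2 = -1 → ∀ p ∈ Ω ∩ slicePlane I,
      fderiv ℝ f p 1 + I * fderiv ℝ f p I = 0

/-- `N_I(f) = sup_{x>0} ∫_ℝ |f(x + Iy)|² dy ∈ [0, ∞]`, the (squared) Hardy norm of `f`
on the slice `Π₊,I`. -/
noncomputable def hardyN (f : ℍ → ℍ) (I : ℍ) : ℝ≥0∞ :=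
  ⨆ (x : ℝ) (_ : 0 < x), ∫⁻ y : ℝ, (‖f ((x : ℍ) + (y : ℍ) * I)‖₊ : ℝ≥0∞) ^ 2

/-!
For `x > 0` both sides of the representation formula
`f (x + yJ) = (1 - JI)/2 · f (x + yI) + (1 + JI)/2 · f (x - yI)`
are holomorphic in `x + iy` for the complex structure on `ℍ` given by left multiplication by `J`
(the coefficients intertwine left multiplication by `±I` with left multiplication by `J`),
and they agree on the real axis, so they agree on the right half-plane by the identity theorem.
The coefficients have norm at most `1`, hence `|f (x + yJ)|² ≤ 2 |f (x + yI)|² + 2 |f (x - yI)|²`,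
and integrating in `y` gives `N_J(f) ≤ 4 N_I(f)`.
-/

open Filter Topology MeasureTheory

instance : CharZero ℍ := charZero_of_injective_algebraMap (algebraMap ℝ ℍ).injective

theorem Quaternion.norm_eq_one_of_sq_eq_neg_one {K : ℍ} (hK : K ^ 2 = -1) : ‖K‖ = 1 := by
  have : ‖K‖ ^ 2 = 1 := by rw [← norm_pow, hK, norm_neg, norm_one]
  exact (pow_eq_one_iff_of_nonneg (norm_nonneg K) two_ne_zero).1 this

theorem Quaternion.re_eq_zero_of_sq_eq_neg_one {K : ℍ} (hK : K ^ 2 = -1) : K.re = 0 := by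
  refine Quaternion.sq_eq_neg_normSq.1 ?_
  rw [Quaternion.normSq_eq_norm_mul_self, Quaternion.norm_eq_one_of_sq_eq_neg_one hK, hK]
  simp

noncomputable def Quaternion.sliceMap (K : ℍ) : ℂ →L[ℝ] ℍ :=
  Complex.reCLM.smulRight 1 + Complex.imCLM.smulRight K

theorem Quaternion.sliceMap_apply (K : ℍ) (z : ℂ) :
    sliceMap K z = (z.re : ℍ) + (z.im : ℍ) * K := by
  simp [sliceMap, ← Quaternion.coe_mul_eq_smul]

theorem Quaternion.sliceMap_ofReal (K : ℍ) (t : ℝ) : sliceMap K t = t := by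
  simp [sliceMap_apply]

theorem Quaternion.sliceMap_mem_slicePlane (K : ℍ) (z : ℂ) : sliceMap K z ∈ slicePlane K :=
  ⟨z.re, z.im, sliceMap_apply K z⟩

theorem Quaternion.re_sliceMap {K : ℍ} (hK : K.re = 0) (z : ℂ) : (sliceMap K z).re = z.re := by
  simp [sliceMap_apply, hK]

theorem Quaternion.norm_sliceMap {K : ℍ} (hK : K ^ 2 = -1) (z : ℂ) : ‖sliceMap K z‖ = ‖z‖ := by
  have hre := re_eq_zero_of_sq_eq_neg_one hK
  have hnormSq : normSq K = 1 := by
    rw [normSq_eq_norm_mul_self, norm_eq_one_of_sq_eq_neg_one hK, mul_one]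
  rw [normSq_def', hre] at hnormSq
  refine (sq_eq_sq₀ (norm_nonneg _) (norm_nonneg _)).1 ?_
  rw [sq, ← normSq_eq_norm_mul_self, Complex.sq_norm, Complex.normSq_apply, normSq_def',
    sliceMap_apply]
  simp only [coe_mul_eq_smul, re_add, imI_add, imJ_add, imK_add, re_coe, imI_coe,
    imJ_coe, imK_coe, re_smul, imI_smul, imJ_smul, imK_smul, smul_eq_mul, hre]
  linear_combination z.im ^ 2 * hnormSq

/-- `g` is holomorphic for the complex structure on `ℍ` given by left multiplication by `J`. -/
def Quaternion.IsLeftHolomorphicOn (J : ℍ) (g : ℂ → ℍ) (U : Set ℂ) : Prop :=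
  ∀ w ∈ U, ∃ D : ℂ →L[ℝ] ℍ, HasFDerivAt g D w ∧ D Complex.I = J * D 1

theorem Quaternion.IsLeftHolomorphicOn.add {J : ℍ} {g h : ℂ → ℍ} {U : Set ℂ}
    (hg : IsLeftHolomorphicOn J g U) (hh : IsLeftHolomorphicOn J h U) :
    IsLeftHolomorphicOn J (fun w => g w + h w) U := by
  intro w hw
  obtain ⟨D, hD, hDI⟩ := hg w hw
  obtain ⟨E, hE, hEI⟩ := hh w hw
  exact ⟨D + E, hD.add hE, by simp [hDI, hEI, mul_add]⟩

theorem Quaternion.IsLeftHolomorphicOn.const_mul {J K c : ℍ} {g : ℂ → ℍ} {U : Set ℂ}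
    (hg : IsLeftHolomorphicOn K g U) (hc : c * K = J * c) :
    IsLeftHolomorphicOn J (fun w => c * g w) U := by
  intro w hw
  obtain ⟨D, hD, hDI⟩ := hg w hw
  refine ⟨(ContinuousLinearMap.mul ℝ ℍ c).comp D,
    (ContinuousLinearMap.mul ℝ ℍ c).hasFDerivAt.comp w hD, ?_⟩
  simp only [ContinuousLinearMap.comp_apply, ContinuousLinearMap.mul_apply', hDI, ← mul_assoc,
    hc]

theorem Quaternion.IsLeftHolomorphicOn.eqOn_of_frequently_eq {J : ℍ} (hJ : J ^ 2 = -1)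
    {g h : ℂ → ℍ} {U : Set ℂ} (hg : IsLeftHolomorphicOn J g U) (hh : IsLeftHolomorphicOn J h U)
    (hU : IsOpen U) (hUc : IsPreconnected U) {z₀ : ℂ} (hz₀ : z₀ ∈ U)
    (hfreq : ∃ᶠ w in 𝓝[≠] z₀, g w = h w) : Set.EqOn g h U := by
  have hJJ : J * J = -1 := by rw [← sq, hJ]
  -- Left multiplication by `w.re + w.im J` makes `ℍ` a complex normed space, for which
  -- `IsLeftHolomorphicOn J` is complex differentiability.
  let _ : Module ℂ ℍ := Module.compHom ℍ (Complex.liftAux J hJJ).toRingHom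
  have smul_def (w : ℂ) (q : ℍ) : w • q = sliceMap J w * q := by
    show Complex.liftAux J hJJ w * q = _
    simp [Complex.liftAux_apply, sliceMap_apply, coe_mul_eq_smul]
  let _ : IsScalarTower ℝ ℂ ℍ :=
    ⟨fun r w q => by rw [smul_def, smul_def, map_smul, smul_mul_assoc]⟩
  let _ : NormedSpace ℂ ℍ := ⟨fun w q => by rw [smul_def, norm_mul, norm_sliceMap hJ]⟩
  have differentiableOn {k : ℂ → ℍ} (hk : IsLeftHolomorphicOn J k U) :
      DifferentiableOn ℂ k U := by
    intro w hw
    obtain ⟨D, hD, hDI⟩ := hk w hw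
    refine (hasFDerivAt_of_restrictScalars ℝ hD (f' := (1 : ℂ →L[ℂ] ℂ).smulRight (D 1)) ?_)
      |>.differentiableAt.differentiableWithinAt
    refine ContinuousLinearMap.coe_injective (Complex.basisOneI.ext fun i => ?_)
    fin_cases i <;> simp [smul_def, hDI, sliceMap_apply]
  exact ((differentiableOn hg).analyticOnNhd hU).eqOn_of_preconnected_of_frequently_eq
    ((differentiableOn hh).analyticOnNhd hU) hUc hz₀ hfreq

theorem SliceHyperholomorphicOn.fderiv_apply_eq_mul {f : ℍ → ℍ} {Ω : Set ℍ}
    (hf : SliceHyperholomorphicOn f Ω) {K : ℍ} (hK : K ^ 2 = -1) {p : ℍ}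
    (hp : p ∈ Ω ∩ slicePlane K) : fderiv ℝ f p K = K * fderiv ℝ f p 1 := by
  have hCR := congrArg (K * ·) (hf.2 K hK p hp)
  simp only [mul_add, ← mul_assoc, ← sq, hK, neg_one_mul, mul_zero, add_neg_eq_zero] at hCR
  exact hCR.symm

theorem SliceHyperholomorphicOn.isLeftHolomorphicOn_comp_sliceMap {f : ℍ → ℍ} {Ω : Set ℍ}
    (hf : SliceHyperholomorphicOn f Ω) (hΩ : IsOpen Ω) {K : ℍ} (hK : K ^ 2 = -1) :
    Quaternion.IsLeftHolomorphicOn K (f ∘ Quaternion.sliceMap K)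
      (Quaternion.sliceMap K ⁻¹' Ω) := by
  intro w hw
  refine ⟨(fderiv ℝ f _).comp (Quaternion.sliceMap K),
    (hf.1.differentiableAt (hΩ.mem_nhds hw)).hasFDerivAt.comp w
      (Quaternion.sliceMap K).hasFDerivAt, ?_⟩
  simpa [Quaternion.sliceMap_apply] using
    hf.fderiv_apply_eq_mul hK ⟨hw, Quaternion.sliceMap_mem_slicePlane K w⟩

theorem Quaternion.one_sub_mul_div_two_mul {J K : ℍ} (hJ : J ^ 2 = -1) (hK : K ^ 2 = -1) :
    (1 - J * K) / 2 * K = J * ((1 - J * K) / 2) := by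
  have h2 : Commute (2⁻¹ : ℍ) K := (Commute.ofNat_left 2 K).inv_left₀
  have hmul : (1 - J * K) * K = J * (1 - J * K) := by
    rw [sub_mul, mul_sub, mul_assoc, ← sq, hK, ← mul_assoc, ← sq, hJ]
    noncomm_ring
  rw [div_eq_mul_inv, mul_assoc, h2.eq, ← mul_assoc, hmul, mul_assoc]

theorem Quaternion.nnnorm_one_sub_mul_div_two_le {J K : ℍ} (hJ : J ^ 2 = -1) (hK : K ^ 2 = -1) :
    ‖(1 - J * K) / 2‖₊ ≤ 1 := by
  have : ‖1 - J * K‖ ≤ 2 := by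
    calc ‖1 - J * K‖ ≤ ‖(1 : ℍ)‖ + ‖J * K‖ := norm_sub_le _ _
      _ = 2 := by
        rw [norm_one, norm_mul, norm_eq_one_of_sq_eq_neg_one hJ, norm_eq_one_of_sq_eq_neg_one hK]
        norm_num
  rw [← NNReal.coe_le_one, coe_nnnorm, norm_div, ← map_ofNat (algebraMap ℝ ℍ) 2,
    norm_algebraMap', Real.norm_ofNat]
  linarith

theorem SliceHyperholomorphicOn.representation_formula {f : ℍ → ℍ}
    (hf : SliceHyperholomorphicOn f {p | 0 < p.re}) {I J : ℍ} (hI : I ^ 2 = -1) (hJ : J ^ 2 = -1)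
    {z : ℂ} (hz : 0 < z.re) :
    f (Quaternion.sliceMap J z) = (1 - J * I) / 2 * f (Quaternion.sliceMap I z) +
      (1 + J * I) / 2 * f (Quaternion.sliceMap (-I) z) := by
  have hnI : (-I) ^ 2 = -1 := by rw [neg_sq, hI]
  have hΩ : IsOpen {p : ℍ | 0 < p.re} := isOpen_lt continuous_const Quaternion.continuous_re
  have hpre {K : ℍ} (hK : K ^ 2 = -1) :
      Quaternion.sliceMap K ⁻¹' {p | 0 < p.re} = {w : ℂ | 0 < w.re} := by
    ext w; simp [Quaternion.re_sliceMap (Quaternion.re_eq_zero_of_sq_eq_neg_one hK)]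
  have hcomp {K : ℍ} (hK : K ^ 2 = -1) :
      Quaternion.IsLeftHolomorphicOn K (f ∘ Quaternion.sliceMap K) {w | 0 < w.re} :=
    hpre hK ▸ hf.isLeftHolomorphicOn_comp_sliceMap hΩ hK
  have hg := hcomp hJ
  have hψ := ((hcomp hI).const_mul (Quaternion.one_sub_mul_div_two_mul hJ hI)).add
    ((hcomp hnI).const_mul (Quaternion.one_sub_mul_div_two_mul hJ hnI))
  rw [mul_neg, sub_neg_eq_add] at hψ
  refine hg.eqOn_of_frequently_eq hJ hψ (isOpen_lt continuous_const Complex.continuous_re)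
    (convex_halfSpace_re_gt 0).isPreconnected (z₀ := 1) (by simp) ?_ hz
  have hreal : Tendsto ((↑) : ℝ → ℂ) (𝓝[≠] 1) (𝓝[≠] 1) :=
    tendsto_nhdsWithin_of_tendsto_nhds_of_eventually_within _
      ((Complex.continuous_ofReal.tendsto' 1 1 Complex.ofReal_one).mono_left nhdsWithin_le_nhds)
      (eventually_nhdsWithin_of_forall fun t ht => by simpa using ht)
  refine hreal.frequently (Eventually.frequently (Eventually.of_forall fun t => ?_))
  simp only [Function.comp_apply, Quaternion.sliceMap_ofReal, ← add_mul]
  rw [← add_div, sub_add_add_cancel, one_add_one_eq_two, div_self two_ne_zero, one_mul]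

theorem SliceHyperholomorphicOn.nnnorm_le_add {f : ℍ → ℍ}
    (hf : SliceHyperholomorphicOn f {p | 0 < p.re}) {I J : ℍ} (hI : I ^ 2 = -1) (hJ : J ^ 2 = -1)
    {x : ℝ} (hx : 0 < x) (y : ℝ) :
    ‖f (x + y * J)‖₊ ≤ ‖f (x + y * I)‖₊ + ‖f (x + (-y : ℝ) * I)‖₊ := by
  have hrep := hf.representation_formula hI hJ (z := ⟨x, y⟩) hx
  simp only [Quaternion.sliceMap_apply, mul_neg, ← neg_mul, ← Quaternion.coe_neg] at hrep
  have ha : ‖(1 - J * I) / 2‖₊ ≤ 1 := Quaternion.nnnorm_one_sub_mul_div_two_le hJ hI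
  have hb : ‖(1 + J * I) / 2‖₊ ≤ 1 := by
    simpa using Quaternion.nnnorm_one_sub_mul_div_two_le hJ (K := -I) (by rw [neg_sq, hI])
  calc ‖f (x + y * J)‖₊
      ≤ ‖(1 - J * I) / 2‖₊ * ‖f (x + y * I)‖₊ +
          ‖(1 + J * I) / 2‖₊ * ‖f (x + (-y : ℝ) * I)‖₊ := by
        rw [hrep]; exact (nnnorm_add_le _ _).trans_eq (by rw [nnnorm_mul, nnnorm_mul])
    _ ≤ 1 * ‖f (x + y * I)‖₊ + 1 * ‖f (x + (-y : ℝ) * I)‖₊ := by gcongr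
    _ = _ := by rw [one_mul, one_mul]

theorem lintegral_le_hardyN (f : ℍ → ℍ) (I : ℍ) {x : ℝ} (hx : 0 < x) :
    ∫⁻ y : ℝ, (‖f (x + y * I)‖₊ : ℝ≥0∞) ^ 2 ≤ hardyN f I :=
  le_iSup₂ (f := fun (x : ℝ) (_ : 0 < x) => ∫⁻ y : ℝ, (‖f (x + y * I)‖₊ : ℝ≥0∞) ^ 2) x hx

theorem hardyN_le_four_mul {f : ℍ → ℍ} (hf : SliceHyperholomorphicOn f {p | 0 < p.re})
    {I J : ℍ} (hI : I ^ 2 = -1) (hJ : J ^ 2 = -1) : hardyN f J ≤ 4 * hardyN f I := by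
  refine iSup₂_le fun x hx => ?_
  set u : ℝ → ℝ≥0∞ := fun y => (‖f (x + y * I)‖₊ : ℝ≥0∞) ^ 2
  have hu : Measurable u := by
    refine ((ContinuousOn.comp_continuous hf.1.continuousOn
      (continuous_const.add (Quaternion.continuous_coe.mul continuous_const)) fun y => ?_).nnnorm
      |>.measurable.coe_nnreal_ennreal).pow_const 2
    simp [Quaternion.re_eq_zero_of_sq_eq_neg_one hI, hx]
  have hpt (y : ℝ) : (‖f (x + y * J)‖₊ : ℝ≥0∞) ^ 2 ≤ 2 * u y + 2 * u (-y) := by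
    have := (pow_le_pow_left₀ zero_le (hf.nnnorm_le_add hI hJ hx y) 2).trans (add_sq_le ..)
    simp only [u, ← mul_add]
    exact_mod_cast this
  calc ∫⁻ y : ℝ, (‖f (x + y * J)‖₊ : ℝ≥0∞) ^ 2
      ≤ ∫⁻ y, 2 * u y + 2 * u (-y) := lintegral_mono hpt
    _ = 2 * (∫⁻ y, u y) + 2 * ∫⁻ y, u (-y) := by
      rw [lintegral_add_left (hu.const_mul 2), lintegral_const_mul' _ _ ENNReal.ofNat_ne_top,
        lintegral_const_mul' _ _ ENNReal.ofNat_ne_top]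
    _ = 4 * ∫⁻ y, u y := by rw [lintegral_neg_eq_self]; ring
    _ ≤ 4 * hardyN f I := by gcongr; exact lintegral_le_hardyN f I hx

/-- A slice hyperholomorphic function on the half-space `ℍ₊` belongs to the Hardy space
of one slice if and only if it belongs to the Hardy space of every slice. -/
theorem hardy_space_slice_independent (f : ℍ → ℍ)
    (hf : SliceHyperholomorphicOn f {p : ℍ | 0 < p.re})
    (I : ℍ) (hI : I ^ 2 = -1) (hfin : hardyN f I < ⊤) :
    ∀ J : ℍ, J ^ 2 = -1 → hardyN f J < ⊤ := fun _ hJ =>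
  (hardyN_le_four_mul hf hI hJ).trans_lt (ENNReal.mul_lt_top ENNReal.ofNat_lt_top hfin)
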